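/- For the synchronous reluctance machine (ψ_r = 0), the observability determinant satisfies Δ_y = (Lδ²/(L_d·L_q))·((i_d² + i_q²)·ω + di_d·i_q − i_d·di_q); consequently, if Lδ ≠ 0 and i_d² + i_q² ≠ 0, then Δ_y ≠ 0 if and only if ω·(i_d² + i_q²) ≠ i_d·di_q − di_d·i_q, i.e. the rank condition holds exactly when the electrical speed differs from the rotational velocity of the stator current vector (i_d, i_q) in the rotor frame. -/

import Mathlib

open Matrix Real

/-- The PMSM (2×2) inductance matrix 𝔏(θ). -/
noncomputable def Lmat2 (Ld Lq θ : ℝ) : Matrix (Fin 2) (Fin 2) ℝ :=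
  !![(Ld + Lq)/2 + (Ld - Lq)/2 * Real.cos (2*θ), (Ld - Lq)/2 * Real.sin (2*θ);
     (Ld - Lq)/2 * Real.sin (2*θ), (Ld + Lq)/2 - (Ld - Lq)/2 * Real.cos (2*θ)]

/-- The first entrywise θ-derivative 𝔏'(θ). -/
noncomputable def Lmat2' (Ld Lq θ : ℝ) : Matrix (Fin 2) (Fin 2) ℝ :=
  !![-2 * ((Ld - Lq)/2) * Real.sin (2*θ), 2 * ((Ld - Lq)/2) * Real.cos (2*θ);
     2 * ((Ld - Lq)/2) * Real.cos (2*θ), 2 * ((Ld - Lq)/2) * Real.sin (2*θ)]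

/-- The second entrywise θ-derivative 𝔏''(θ). -/
noncomputable def Lmat2'' (Ld Lq θ : ℝ) : Matrix (Fin 2) (Fin 2) ℝ :=
  !![-4 * ((Ld - Lq)/2) * Real.cos (2*θ), -4 * ((Ld - Lq)/2) * Real.sin (2*θ);
     -4 * ((Ld - Lq)/2) * Real.sin (2*θ), 4 * ((Ld - Lq)/2) * Real.cos (2*θ)]

/-- The rotor permanent-magnet flux vector ψ(θ). -/
noncomputable def psiVec (ψr θ : ℝ) : Fin 2 → ℝ := ψr • ![Real.cos θ, Real.sin θ]

/-- Its θ-derivative ψ'(θ). -/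
noncomputable def psiVec' (ψr θ : ℝ) : Fin 2 → ℝ := ψr • ![-Real.sin θ, Real.cos θ]

/-- Its second θ-derivative ψ''(θ) = −ψ(θ). -/
noncomputable def psiVec'' (ψr θ : ℝ) : Fin 2 → ℝ := -psiVec ψr θ

/-- The 2×2 rotation matrix R(θ). -/
noncomputable def Rmat (θ : ℝ) : Matrix (Fin 2) (Fin 2) ℝ :=
  !![Real.cos θ, -Real.sin θ;
     Real.sin θ, Real.cos θ]

/-- Its entrywise θ-derivative R'(θ). -/
noncomputable def Rmat' (θ : ℝ) : Matrix (Fin 2) (Fin 2) ℝ :=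
  !![-Real.sin θ, -Real.cos θ;
     Real.cos θ, -Real.sin θ]

/-- The PMSM observability determinant Δ_y, built from
c₁ = −𝔏(θ)⁻¹·(𝔏'(θ)·I + ψ'(θ)) and c₂ = −𝔏(θ)⁻¹·(𝔏'(θ)·dI + ω·(𝔏''(θ)·I + ψ''(θ))),
where I = R(θ)·(i_d, i_q)ᵀ and dI = R(θ)·(di_d, di_q)ᵀ + ω·R'(θ)·(i_d, i_q)ᵀ. -/
noncomputable def deltaY2 (Ld Lq ψr θ ω i_d i_q di_d di_q : ℝ) : ℝ :=
  let I : Fin 2 → ℝ := Rmat θ *ᵥ ![i_d, i_q]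
  let dI : Fin 2 → ℝ := Rmat θ *ᵥ ![di_d, di_q] + ω • (Rmat' θ *ᵥ ![i_d, i_q])
  let c₁ : Fin 2 → ℝ := -((Lmat2 Ld Lq θ)⁻¹ *ᵥ (Lmat2' Ld Lq θ *ᵥ I + psiVec' ψr θ))
  let c₂ : Fin 2 → ℝ :=
    -((Lmat2 Ld Lq θ)⁻¹ *ᵥ (Lmat2' Ld Lq θ *ᵥ dI + ω • (Lmat2'' Ld Lq θ *ᵥ I + psiVec'' ψr θ)))
  c₁ 0 * c₂ 1 - c₁ 1 * c₂ 0


lemma Lmat2_inv (Ld Lq θ : ℝ) (hLd : Ld ≠ 0) (hLq : Lq ≠ 0) :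
    (Lmat2 Ld Lq θ)⁻¹ = (Ld*Lq)⁻¹ •
      !![(Ld + Lq)/2 - (Ld - Lq)/2 * Real.cos (2*θ), -((Ld - Lq)/2 * Real.sin (2*θ));
         -((Ld - Lq)/2 * Real.sin (2*θ)), (Ld + Lq)/2 + (Ld - Lq)/2 * Real.cos (2*θ)] := by
  apply Matrix.inv_eq_right_inv
  have hs : Real.sin (θ*2) ^ 2 = 1 - Real.cos (θ*2) ^ 2 := by
    have h := Real.sin_sq_add_cos_sq (θ*2); linarith
  ext i j
  fin_cases i <;> fin_cases j <;>
    simp [Lmat2, Matrix.mul_apply, Fin.sum_univ_two, Matrix.one_apply]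
  all_goals field_simp
  all_goals try ring
  all_goals (simp only [hs]; ring)

set_option maxHeartbeats 1600000 in
set_option maxRecDepth 20000 in
/-- For the SyRM (ψ_r = 0),
Δ_y = (Lδ²/(L_d·L_q))·((i_d² + i_q²)·ω + di_d·i_q − i_d·di_q); consequently, if Lδ ≠ 0 and
i_d² + i_q² ≠ 0, then Δ_y ≠ 0 iff ω·(i_d² + i_q²) ≠ i_d·di_q − di_d·i_q. -/
theorem syrm_deltaY (Ld Lq : ℝ) (hLd : Ld ≠ 0) (hLq : Lq ≠ 0)
    (θ ω i_d i_q di_d di_q : ℝ) :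
    deltaY2 Ld Lq 0 θ ω i_d i_q di_d di_q =
      (Ld - Lq) ^ 2 / (Ld * Lq) * ((i_d ^ 2 + i_q ^ 2) * ω + di_d * i_q - i_d * di_q) ∧
    (Ld - Lq ≠ 0 → i_d ^ 2 + i_q ^ 2 ≠ 0 →
      (deltaY2 Ld Lq 0 θ ω i_d i_q di_d di_q ≠ 0 ↔
        ω * (i_d ^ 2 + i_q ^ 2) ≠ i_d * di_q - di_d * i_q)) := by
  have hs : Real.sin θ ^ 2 = 1 - Real.cos θ ^ 2 := by
    have h := Real.sin_sq_add_cos_sq θ; linarith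
  have key : deltaY2 Ld Lq 0 θ ω i_d i_q di_d di_q =
      (Ld - Lq) ^ 2 / (Ld * Lq) * ((i_d ^ 2 + i_q ^ 2) * ω + di_d * i_q - i_d * di_q) := by
    unfold deltaY2
    simp [Lmat2_inv Ld Lq θ hLd hLq, Matrix.mulVec, dotProduct, Fin.sum_univ_two, psiVec, psiVec', psiVec'',
      Rmat, Rmat', Lmat2', Lmat2'', Real.sin_two_mul, Real.cos_two_mul]
    field_simp
    ring_nf
    have h2 : Real.sin θ ^ 2 = 1 - Real.cos θ ^ 2 := hs
    have h3 : Real.sin θ ^ 3 = (1 - Real.cos θ ^ 2) * Real.sin θ := by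
      rw [pow_succ, h2]
    have h4 : Real.sin θ ^ 4 = (1 - Real.cos θ ^ 2) ^ 2 := by
      rw [show (4:ℕ) = 2*2 from rfl, pow_mul, h2]
    have h5 : Real.sin θ ^ 5 = (1 - Real.cos θ ^ 2) ^ 2 * Real.sin θ := by
      rw [pow_succ, h4]
    have h6 : Real.sin θ ^ 6 = (1 - Real.cos θ ^ 2) ^ 3 := by
      rw [show (6:ℕ) = 2*3 from rfl, pow_mul, h2]
    have h7 : Real.sin θ ^ 7 = (1 - Real.cos θ ^ 2) ^ 3 * Real.sin θ := by
      rw [pow_succ, h6]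
    have h8 : Real.sin θ ^ 8 = (1 - Real.cos θ ^ 2) ^ 4 := by
      rw [show (8:ℕ) = 2*4 from rfl, pow_mul, h2]
    simp only [h8, h7, h6, h5, h4, h3, h2]
    ring_nf
  refine ⟨key, fun hδ hi => ?_⟩
  rw [key]
  have hK : (Ld - Lq) ^ 2 / (Ld * Lq) ≠ 0 :=
    div_ne_zero (pow_ne_zero 2 hδ) (mul_ne_zero hLd hLq)
  rw [mul_ne_zero_iff]
  constructor
  · intro h hc
    exact h.2 (by linarith [hc] ; )
  · intro h
    exact ⟨hK, fun hc => h (by linarith)⟩
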